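/- Every stable model of a propositional definition satisfies the completion: if I is a stable model, then for every defined atom P, I makes P true if and only if I makes the body φ_P true. -/
import Mathlib


/-- Propositional formulas built from atoms by negation and conjunction. -/
inductive PForm (α : Type*) : Type _
  | atom (a : α)
  | neg (φ : PForm α)
  | conj (φ ψ : PForm α)

/-- Classical two-valued evaluation. -/
def ceval {α : Type*} (v : α → Bool) : PForm α → Bool
  | .atom a => v a
  | .neg φ => !(ceval v φ)
  | .conj φ ψ => ceval v φ && ceval v ψ

/-- Pair-evaluation: positive occurrences of atoms are evaluated by the first
valuation, negative ones by the second. -/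
def peval {α : Type*} : (α → Bool) → (α → Bool) → PForm α → Bool
  | I, _, .atom a => I a
  | I, J, .neg φ => !(peval J I φ)
  | I, J, .conj φ ψ => peval I J φ && peval I J ψ

/-- Extension of a valuation of the defined atoms by the fixed parameter
valuation. -/
def ext {α π : Type*} (par : π → Bool) (I : α → Bool) : α ⊕ π → Bool :=
  Sum.elim I par

/-- The two-argument operator C of a propositional definition: C(J,I) makes a
defined atom P true iff the body φ_P is true when its positive occurrences of
defined atoms are evaluated by J and its negative ones by I (parameters fixed). -/
def Cop {α π : Type*} (φ : α → PForm (α ⊕ π)) (par : π → Bool)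
    (J I : α → Bool) : α → Bool :=
  fun P => peval (ext par J) (ext par I) (φ P)

/-- I is a stable model iff I is the least fixed point of J ↦ C(J, I). -/
def IsStable {α π : Type*} (φ : α → PForm (α ⊕ π)) (par : π → Bool)
    (I : α → Bool) : Prop :=
  IsLeast {J : α → Bool | Cop φ par J I = J} I

/-- A formula is positive (negation-free). -/
def NegFree {α : Type*} : PForm α → Prop
  | .atom _ => True
  | .neg _ => False
  | .conj φ ψ => NegFree φ ∧ NegFree ψ

lemma peval_self {α : Type*} (v : α → Bool) (φ : PForm α) :
    peval v v φ = ceval v φ := by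
  induction φ with
  | atom a => rfl
  | neg ψ ih => simp [peval, ceval, ih]
  | conj ψ χ ih1 ih2 => simp [peval, ceval, ih1, ih2]

/-- Every stable model of a propositional definition satisfies the completion:
a defined atom is true in I iff its body is true in I. -/
theorem stable_model_satisfies_completion {α π : Type*}
    (φ : α → PForm (α ⊕ π)) (par : π → Bool) (I : α → Bool)
    (hI : IsStable φ par I) :
    ∀ P : α, I P = true ↔ ceval (ext par I) (φ P) = true := by
  intro P
  have h := hI.1
  have h2 : Cop φ par I I P = I P := congrFun h P
  rw [← h2]
  simp [Cop, peval_self]
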